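/- arXiv:1405.4066 — 6 statements merged into one kernel-verified Lean document; each statement's English description precedes it below -/
import Mathlib

section
/- Let f be strictly concave on [0,1] with f(0)=0, and let σ = Σ_j p_j σ_j be a convex combination of density operators with at least two distinct σ_j having p_j > 0 (σ not equal to all σ_j). Then Tr f(σ) > Σ_j p_j Tr f(σ_j). -/
open Set Matrix
open scoped ComplexOrder

/-- `Tr f(σ)` via functional calculus: the sum of `f` over the eigenvalues of a
Hermitian matrix `σ` (and `0` if `σ` is not Hermitian). -/
noncomputable def trF {n : ℕ} (f : ℝ → ℝ) (σ : Matrix (Fin n) (Fin n) ℂ) : ℝ :=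
  if h : σ.IsHermitian then ∑ i, f (h.eigenvalues i) else 0

/-- A density matrix: positive semidefinite with unit trace. -/
def IsDensityMatrix {n : ℕ} (σ : Matrix (Fin n) (Fin n) ℂ) : Prop :=
  σ.PosSemidef ∧ σ.trace = 1

/-!
Let `v` be an eigenbasis of `σ = ∑ j, p j • σ j` and `q j i = ⟪v i, σ j v i⟫`. For an eigenbasis `u`
of `σ j`, the matrix `‖⟪u k, v i⟫‖²` is doubly stochastic and carries the spectrum of `σ j` to
`q j`, so Jensen's inequality gives Peierls' inequality `Tr f(σ j) ≤ ∑ i, f (q j i)`. The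
eigenvalues of `σ` are `∑ j, p j * q j i`, and Jensen again gives
`∑ j, p j * f (q j i) ≤ f (∑ j, p j * q j i)`. If both inequalities were equalities, strict
concavity would make every `v i` an eigenvector of every `σ j` with an eigenvalue `q j i` that does
not depend on `j`, so all `σ j` would coincide.
-/

open scoped InnerProductSpace

section DoublyStochastic

variable {ι : Type*} [Fintype ι] [DecidableEq ι] {M : Matrix ι ι ℝ}

lemma sum_eq_sum_sum_smul_of_mem_doublyStochastic (hM : M ∈ doublyStochastic ℝ ι)
    (g : ι → ℝ) : ∑ k, g k = ∑ i, ∑ k, M i k • g k := by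
  rw [Finset.sum_comm]
  simp [← Finset.sum_mul, sum_col_of_mem_doublyStochastic hM]

lemma Convex.mulVec_apply_mem_of_mem_doublyStochastic {s : Set ℝ} (hs : Convex ℝ s)
    (hM : M ∈ doublyStochastic ℝ ι) {x : ι → ℝ} (hx : ∀ k, x k ∈ s) (i : ι) :
    (M *ᵥ x) i ∈ s :=
  hs.sum_mem (fun _ _ ↦ nonneg_of_mem_doublyStochastic hM)
    (sum_row_of_mem_doublyStochastic hM i) fun k _ ↦ hx k

variable {s : Set ℝ} {f : ℝ → ℝ} {x : ι → ℝ}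

theorem ConcaveOn.sum_le_sum_mulVec (hf : ConcaveOn ℝ s f) (hM : M ∈ doublyStochastic ℝ ι)
    (hx : ∀ k, x k ∈ s) : ∑ k, f (x k) ≤ ∑ i, f ((M *ᵥ x) i) := by
  rw [sum_eq_sum_sum_smul_of_mem_doublyStochastic hM]
  gcongr with i
  exact hf.le_map_sum (fun _ _ ↦ nonneg_of_mem_doublyStochastic hM)
    (sum_row_of_mem_doublyStochastic hM i) fun k _ ↦ hx k

theorem StrictConcaveOn.sum_lt_sum_mulVec (hf : StrictConcaveOn ℝ s f)
    (hM : M ∈ doublyStochastic ℝ ι) (hx : ∀ k, x k ∈ s)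
    (hne : ∃ i k, M i k ≠ 0 ∧ x k ≠ (M *ᵥ x) i) : ∑ k, f (x k) < ∑ i, f ((M *ᵥ x) i) := by
  obtain ⟨i, k, hik, hk⟩ := hne
  rw [sum_eq_sum_sum_smul_of_mem_doublyStochastic hM]
  refine Finset.sum_lt_sum (fun i _ ↦ ?_) ⟨i, Finset.mem_univ i, ?_⟩
  · exact hf.concaveOn.le_map_sum (fun _ _ ↦ nonneg_of_mem_doublyStochastic hM)
      (sum_row_of_mem_doublyStochastic hM i) fun k _ ↦ hx k
  · exact (hf.lt_map_sum_iff_of_nonneg' (fun _ _ ↦ nonneg_of_mem_doublyStochastic hM)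
      (sum_row_of_mem_doublyStochastic hM i) fun k _ ↦ hx k).2 ⟨k, Finset.mem_univ k, hik, hk⟩

end DoublyStochastic

namespace OrthonormalBasis

variable {ι 𝕜 E : Type*} [Fintype ι] [RCLike 𝕜] [NormedAddCommGroup E] [InnerProductSpace 𝕜 E]

noncomputable def overlap (u v : OrthonormalBasis ι 𝕜 E) : Matrix ι ι ℝ :=
  Matrix.of fun i k ↦ ‖⟪u k, v i⟫_𝕜‖ ^ 2

lemma overlap_apply (u v : OrthonormalBasis ι 𝕜 E) (i k : ι) :
    u.overlap v i k = ‖⟪u k, v i⟫_𝕜‖ ^ 2 := rfl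

lemma overlap_mem_doublyStochastic [DecidableEq ι] (u v : OrthonormalBasis ι 𝕜 E) :
    u.overlap v ∈ doublyStochastic ℝ ι := by
  refine mem_doublyStochastic_iff_sum.2 ⟨fun _ _ ↦ sq_nonneg _, fun i ↦ ?_, fun k ↦ ?_⟩
  · simp [overlap_apply, u.sum_sq_norm_inner_right, v.orthonormal.1 i]
  · simp [overlap_apply, v.sum_sq_norm_inner_left, u.orthonormal.1 k]

end OrthonormalBasis

namespace Matrix.IsHermitian

variable {ι 𝕜 : Type*} [Fintype ι] [DecidableEq ι] [RCLike 𝕜] {A : Matrix ι ι 𝕜}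

lemma toEuclideanLin_eigenvectorBasis (hA : A.IsHermitian) (k : ι) :
    toEuclideanLin A (hA.eigenvectorBasis k) = hA.eigenvalues k • hA.eigenvectorBasis k := by
  ext i
  simp [toLpLin_apply, hA.mulVec_eigenvectorBasis]

lemma toEuclideanLin_apply_eq_sum (hA : A.IsHermitian) (x : EuclideanSpace 𝕜 ι) :
    toEuclideanLin A x =
      ∑ k, ⟪hA.eigenvectorBasis k, x⟫_𝕜 • hA.eigenvalues k • hA.eigenvectorBasis k := by
  conv_lhs => rw [← hA.eigenvectorBasis.sum_repr' x]
  simp [toEuclideanLin_eigenvectorBasis]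

lemma toEuclideanLin_eq_smul_of_eigenvalues_eq (hA : A.IsHermitian) {x : EuclideanSpace 𝕜 ι}
    {c : ℝ} (h : ∀ k, ⟪hA.eigenvectorBasis k, x⟫_𝕜 ≠ 0 → hA.eigenvalues k = c) :
    toEuclideanLin A x = c • x := by
  conv_rhs => rw [← hA.eigenvectorBasis.sum_repr' x]
  rw [hA.toEuclideanLin_apply_eq_sum, Finset.smul_sum]
  refine Finset.sum_congr rfl fun k _ ↦ ?_
  by_cases hk : ⟪hA.eigenvectorBasis k, x⟫_𝕜 = 0
  · simp [hk]
  · rw [h k hk, smul_comm]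

lemma re_inner_toEuclideanLin_self (hA : A.IsHermitian) (x : EuclideanSpace 𝕜 ι) :
    RCLike.re ⟪x, toEuclideanLin A x⟫_𝕜 =
      ∑ k, ‖⟪hA.eigenvectorBasis k, x⟫_𝕜‖ ^ 2 * hA.eigenvalues k := by
  rw [toEuclideanLin_apply_eq_sum hA, inner_sum, map_sum]
  refine Finset.sum_congr rfl fun k _ ↦ ?_
  rw [inner_smul_right, inner_smul_right_eq_smul, ← inner_conj_symm x,
    RCLike.real_smul_eq_coe_mul, mul_left_comm, RCLike.mul_conj, mul_comm]
  norm_cast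

lemma re_inner_toEuclideanLin_eq_overlap_mulVec (hA : A.IsHermitian)
    (v : OrthonormalBasis ι 𝕜 (EuclideanSpace 𝕜 ι)) (i : ι) :
    RCLike.re ⟪v i, toEuclideanLin A (v i)⟫_𝕜 =
      (hA.eigenvectorBasis.overlap v *ᵥ hA.eigenvalues) i :=
  hA.re_inner_toEuclideanLin_self (v i)

lemma re_inner_eigenvectorBasis_toEuclideanLin (hA : A.IsHermitian) (k : ι) :
    RCLike.re ⟪hA.eigenvectorBasis k, toEuclideanLin A (hA.eigenvectorBasis k)⟫_𝕜 =
      hA.eigenvalues k := by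
  simp [toEuclideanLin_eigenvectorBasis, inner_smul_right_eq_smul, RCLike.real_smul_eq_coe_mul,
    hA.eigenvectorBasis.orthonormal.1 k]

variable {s : Set ℝ} {f : ℝ → ℝ}

lemma re_inner_toEuclideanLin_mem (hA : A.IsHermitian) (hs : Convex ℝ s)
    (hspec : ∀ k, hA.eigenvalues k ∈ s) (v : OrthonormalBasis ι 𝕜 (EuclideanSpace 𝕜 ι)) (i : ι) :
    RCLike.re ⟪v i, toEuclideanLin A (v i)⟫_𝕜 ∈ s := by
  rw [hA.re_inner_toEuclideanLin_eq_overlap_mulVec]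
  exact hs.mulVec_apply_mem_of_mem_doublyStochastic
    (OrthonormalBasis.overlap_mem_doublyStochastic _ _) hspec i

theorem sum_map_eigenvalues_le_sum_map_re_inner (hA : A.IsHermitian) (hf : ConcaveOn ℝ s f)
    (hspec : ∀ k, hA.eigenvalues k ∈ s) (v : OrthonormalBasis ι 𝕜 (EuclideanSpace 𝕜 ι)) :
    ∑ k, f (hA.eigenvalues k) ≤ ∑ i, f (RCLike.re ⟪v i, toEuclideanLin A (v i)⟫_𝕜) := by
  simp only [hA.re_inner_toEuclideanLin_eq_overlap_mulVec v]
  exact hf.sum_le_sum_mulVec (OrthonormalBasis.overlap_mem_doublyStochastic _ _) hspec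

theorem sum_map_eigenvalues_lt_sum_map_re_inner (hA : A.IsHermitian)
    (hf : StrictConcaveOn ℝ s f) (hspec : ∀ k, hA.eigenvalues k ∈ s)
    (v : OrthonormalBasis ι 𝕜 (EuclideanSpace 𝕜 ι))
    (hv : ∃ i, toEuclideanLin A (v i) ≠ RCLike.re ⟪v i, toEuclideanLin A (v i)⟫_𝕜 • v i) :
    ∑ k, f (hA.eigenvalues k) < ∑ i, f (RCLike.re ⟪v i, toEuclideanLin A (v i)⟫_𝕜) := by
  obtain ⟨i, hi⟩ := hv
  simp only [hA.re_inner_toEuclideanLin_eq_overlap_mulVec v] at hi ⊢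
  refine hf.sum_lt_sum_mulVec (OrthonormalBasis.overlap_mem_doublyStochastic _ _) hspec ?_
  by_contra! h
  exact hi (hA.toEuclideanLin_eq_smul_of_eigenvalues_eq fun k hk ↦
    h i k (by simpa [OrthonormalBasis.overlap_apply] using hk))

end Matrix.IsHermitian

section Mixture

variable {ι κ : Type*} [Fintype ι] [Fintype κ] {s : Set ℝ} {f : ℝ → ℝ} {p : κ → ℝ}
  {q : κ → ι → ℝ}

theorem ConcaveOn.sum_mul_sum_le_sum_map_sum (hf : ConcaveOn ℝ s f) (hp₀ : ∀ j, 0 ≤ p j)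
    (hp₁ : ∑ j, p j = 1) (hq : ∀ j i, q j i ∈ s) :
    ∑ j, p j * ∑ i, f (q j i) ≤ ∑ i, f (∑ j, p j * q j i) := by
  simp_rw [Finset.mul_sum]
  rw [Finset.sum_comm]
  gcongr with i
  exact hf.le_map_sum (fun j _ ↦ hp₀ j) hp₁ fun j _ ↦ hq j i

theorem StrictConcaveOn.sum_mul_sum_lt_sum_map_sum (hf : StrictConcaveOn ℝ s f)
    (hp₀ : ∀ j, 0 < p j) (hp₁ : ∑ j, p j = 1) (hq : ∀ j i, q j i ∈ s)
    (hne : ∃ i j k, q j i ≠ q k i) :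
    ∑ j, p j * ∑ i, f (q j i) < ∑ i, f (∑ j, p j * q j i) := by
  obtain ⟨i, j, k, hjk⟩ := hne
  simp_rw [Finset.mul_sum]
  rw [Finset.sum_comm]
  refine Finset.sum_lt_sum (fun i _ ↦ ?_) ⟨i, Finset.mem_univ i, ?_⟩
  · exact hf.concaveOn.le_map_sum (fun j _ ↦ (hp₀ j).le) hp₁ fun j _ ↦ hq j i
  · exact hf.lt_map_sum (fun j _ ↦ hp₀ j) hp₁ (fun j _ ↦ hq j i)
      ⟨j, Finset.mem_univ j, k, Finset.mem_univ k, hjk⟩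

end Mixture

lemma Matrix.re_inner_toEuclideanLin_sum_smul {ι κ 𝕜 : Type*} [Fintype ι] [DecidableEq ι]
    [Fintype κ] [RCLike 𝕜] (c : κ → ℝ) (A : κ → Matrix ι ι 𝕜) (x : EuclideanSpace 𝕜 ι) :
    RCLike.re ⟪x, toEuclideanLin (∑ j, (c j : 𝕜) • A j) x⟫_𝕜 =
      ∑ j, c j * RCLike.re ⟪x, toEuclideanLin (A j) x⟫_𝕜 := by
  simp only [map_sum, map_smul, LinearMap.sum_apply, LinearMap.smul_apply, inner_sum,
    inner_smul_right, RCLike.re_ofReal_mul]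

lemma Matrix.PosSemidef.eigenvalues_mem_Icc_of_trace_eq_one {ι 𝕜 : Type*} [Fintype ι]
    [DecidableEq ι] [RCLike 𝕜] {A : Matrix ι ι 𝕜} (hA : A.PosSemidef) (htr : A.trace = 1)
    (k : ι) : hA.isHermitian.eigenvalues k ∈ Icc (0 : ℝ) 1 := by
  have hsum : ∑ k, hA.isHermitian.eigenvalues k = 1 := by
    exact_mod_cast hA.isHermitian.trace_eq_sum_eigenvalues.symm.trans htr
  refine ⟨hA.eigenvalues_nonneg k, hsum ▸ ?_⟩
  exact Finset.single_le_sum (fun k _ ↦ hA.eigenvalues_nonneg k) (Finset.mem_univ k)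

lemma trF_eq_sum_eigenvalues {n : ℕ} (f : ℝ → ℝ) {A : Matrix (Fin n) (Fin n) ℂ}
    (hA : A.IsHermitian) : trF f A = ∑ i, f (hA.eigenvalues i) :=
  dif_pos hA

theorem trF_strictly_concave_on_density_matrices_general
    {n m : ℕ} (f : ℝ → ℝ) (hf : StrictConcaveOn ℝ (Icc (0:ℝ) 1) f)
    (p : Fin m → ℝ) (hp : ∀ j, 0 < p j) (hp1 : ∑ j, p j = 1)
    (σ : Fin m → Matrix (Fin n) (Fin n) ℂ) (hσ : ∀ j, IsDensityMatrix (σ j))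
    (hdist : ∃ j k, σ j ≠ σ k) :
    ∑ j, p j * trF f (σ j) < trF f (∑ j, (p j : ℂ) • σ j) := by
  have hH j : (σ j).IsHermitian := (hσ j).1.isHermitian
  have hspec j : ∀ k, (hH j).eigenvalues k ∈ Icc (0 : ℝ) 1 :=
    (hσ j).1.eigenvalues_mem_Icc_of_trace_eq_one (hσ j).2
  have hS : (∑ j, (p j : ℂ) • σ j).IsHermitian :=
    (posSemidef_sum _ fun j _ ↦ (hσ j).1.smul (by exact_mod_cast (hp j).le)).isHermitian
  set v := hS.eigenvectorBasis
  set q : Fin m → Fin n → ℝ := fun j i ↦ RCLike.re ⟪v i, toEuclideanLin (σ j) (v i)⟫_ℂ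
  have hq j i : q j i ∈ Icc (0 : ℝ) 1 :=
    (hH j).re_inner_toEuclideanLin_mem (convex_Icc 0 1) (hspec j) v i
  have hmix : trF f (∑ j, (p j : ℂ) • σ j) = ∑ i, f (∑ j, p j * q j i) := by
    rw [trF_eq_sum_eigenvalues f hS]
    congr! with i
    rw [← hS.re_inner_eigenvectorBasis_toEuclideanLin]
    exact re_inner_toEuclideanLin_sum_smul p σ (v i)
  have hpeierls j : p j * trF f (σ j) ≤ p j * ∑ i, f (q j i) := by
    rw [trF_eq_sum_eigenvalues f (hH j)]
    exact mul_le_mul_of_nonneg_left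
      ((hH j).sum_map_eigenvalues_le_sum_map_re_inner hf.concaveOn (hspec j) v) (hp j).le
  rw [hmix]
  obtain ⟨j, hj⟩ | hne : (∃ j i, toEuclideanLin (σ j) (v i) ≠ q j i • v i) ∨
      ∃ i j k, q j i ≠ q k i := by
    by_contra! h
    obtain ⟨j, k, hjk⟩ := hdist
    exact hjk (toEuclideanLin.injective (v.toBasis.ext fun i ↦ by simp [h.1, h.2 i j k]))
  · calc ∑ j, p j * trF f (σ j) < ∑ j, p j * ∑ i, f (q j i) := by
          refine Finset.sum_lt_sum (fun j _ ↦ hpeierls j) ⟨j, Finset.mem_univ j, ?_⟩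
          rw [trF_eq_sum_eigenvalues f (hH j)]
          exact mul_lt_mul_of_pos_left
            ((hH j).sum_map_eigenvalues_lt_sum_map_re_inner hf (hspec j) v hj) (hp j)
      _ ≤ ∑ i, f (∑ j, p j * q j i) :=
          hf.concaveOn.sum_mul_sum_le_sum_map_sum (fun j ↦ (hp j).le) hp1 hq
  · calc ∑ j, p j * trF f (σ j) ≤ ∑ j, p j * ∑ i, f (q j i) :=
          Finset.sum_le_sum fun j _ ↦ hpeierls j
      _ < ∑ i, f (∑ j, p j * q j i) := hf.sum_mul_sum_lt_sum_map_sum hp hp1 hq hne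

theorem trF_strictly_concave_on_density_matrices
    {n m : ℕ} (f : ℝ → ℝ) (hf : StrictConcaveOn ℝ (Icc (0:ℝ) 1) f) (hf0 : f 0 = 0)
    (p : Fin m → ℝ) (hp : ∀ j, 0 < p j) (hp1 : ∑ j, p j = 1)
    (σ : Fin m → Matrix (Fin n) (Fin n) ℂ) (hσ : ∀ j, IsDensityMatrix (σ j))
    (hdist : ∃ j k, σ j ≠ σ k) :
    ∑ j, p j * trF f (σ j) < trF f (∑ j, (p j : ℂ) • σ j) :=
  trF_strictly_concave_on_density_matrices_general f hf p hp hp1 σ hσ hdist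
end

section
/- Let K be a complex s×s matrix and μ Hermitian with μ ≥ ±(1/2)(I − K K*). Set K₂ = sqrt(μ + (1/2)(K K* + I)) and K₁ = K₂⁻ K (generalized inverse). Then K₁* K₁ ≤ I. -/
open Matrix
open scoped ComplexOrder

/-!
Put `M = μ + (KK* + I)/2`. The hypothesis `μ ≥ -(I - KK*)/2` says `M ≥ I`, so its square root `S`
is invertible, and `μ ≥ (I - KK*)/2` says `KK* ≤ M = S²`. Conjugating by `S⁻¹` gives
`K₁K₁* ≤ I` for `K₁ = S⁻¹K`; in a C*-algebra both `aa* ≤ 1` and `a*a ≤ 1` mean `‖a‖ ≤ 1`.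
-/

/-- The positive semidefinite square root of a positive semidefinite matrix
(the definition `Matrix.PosSemidef.sqrt` of the older Mathlib, since removed). -/
noncomputable def Matrix.PosSemidef.sqrt {n 𝕜 : Type*} [Fintype n] [DecidableEq n] [RCLike 𝕜]
    {A : Matrix n n 𝕜} (hA : A.PosSemidef) : Matrix n n 𝕜 :=
  hA.1.eigenvectorUnitary.1 * diagonal ((↑) ∘ Real.sqrt ∘ hA.1.eigenvalues) *
  (star hA.1.eigenvectorUnitary : Matrix n n 𝕜)

namespace CStarAlgebra

variable {A : Type*} [CStarAlgebra A] [PartialOrder A] [StarOrderedRing A]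

theorem star_mul_self_le_one_iff_norm_le_one (a : A) : star a * a ≤ 1 ↔ ‖a‖ ≤ 1 := by
  rw [← norm_le_one_iff_of_nonneg _ (star_mul_self_nonneg a), CStarRing.norm_star_mul_self,
    ← sq, sq_le_one_iff₀ (norm_nonneg a)]

theorem star_mul_self_le_one_iff_mul_star_self_le_one (a : A) :
    star a * a ≤ 1 ↔ a * star a ≤ 1 := by
  rw [star_mul_self_le_one_iff_norm_le_one, ← norm_star a, ← star_mul_self_le_one_iff_norm_le_one,
    star_star]

end CStarAlgebra

namespace Matrix

section Sqrt

variable {n 𝕜 : Type*} [Fintype n] [DecidableEq n] [RCLike 𝕜] {A : Matrix n n 𝕜}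

theorem PosSemidef.posSemidef_sqrt (hA : A.PosSemidef) : hA.sqrt.PosSemidef := by
  have hD : (diagonal ((↑) ∘ Real.sqrt ∘ hA.1.eigenvalues : n → 𝕜)).PosSemidef :=
    posSemidef_diagonal_iff.mpr fun i => by simp [Real.sqrt_nonneg]
  simpa [sqrt, star_eq_conjTranspose] using
    hD.mul_mul_conjTranspose_same hA.1.eigenvectorUnitary.1

theorem PosSemidef.sqrt_mul_self (hA : A.PosSemidef) : hA.sqrt * hA.sqrt = A := by
  have hD : diagonal ((↑) ∘ Real.sqrt ∘ hA.1.eigenvalues : n → 𝕜) *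
      diagonal ((↑) ∘ Real.sqrt ∘ hA.1.eigenvalues) = diagonal ((↑) ∘ hA.1.eigenvalues) := by
    rw [diagonal_mul_diagonal]
    congr with i
    simp [← RCLike.ofReal_mul, Real.mul_self_sqrt (hA.eigenvalues_nonneg i)]
  conv_rhs => rw [hA.1.spectral_theorem, Unitary.conjStarAlgAut_apply, ← hD]
  simp only [sqrt, mul_assoc]
  rw [← mul_assoc (star _), Unitary.star_mul_self_of_mem (Subtype.prop _), one_mul]

end Sqrt

variable {n : Type*} [Fintype n] [DecidableEq n]

open scoped MatrixOrder Matrix.Norms.L2Operator in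
theorem conjTranspose_mul_self_le_one_iff_mul_conjTranspose_le_one (A : Matrix n n ℂ) :
    Aᴴ * A ≤ 1 ↔ A * Aᴴ ≤ 1 :=
  CStarAlgebra.star_mul_self_le_one_iff_mul_star_self_le_one A

open scoped MatrixOrder in
theorem IsHermitian.posSemidef_one_sub_conjTranspose_mul_self_inv_mul {S K : Matrix n n ℂ}
    (hS : S.IsHermitian) (hS_det : IsUnit S.det) (h : (S * S - K * Kᴴ).PosSemidef) :
    (1 - (S⁻¹ * K)ᴴ * (S⁻¹ * K)).PosSemidef := by
  rw [← le_iff] at h ⊢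
  rw [conjTranspose_mul_self_le_one_iff_mul_conjTranspose_le_one, conjTranspose_mul,
    conjTranspose_nonsing_inv, hS.eq]
  calc S⁻¹ * K * (Kᴴ * S⁻¹) = S⁻¹ * (K * Kᴴ) * S⁻¹ := by simp only [mul_assoc]
    _ ≤ S⁻¹ * (S * S) * S⁻¹ := hS.inv.isSelfAdjoint.conjugate_le_conjugate h
    _ = 1 := by rw [← mul_assoc, nonsing_inv_mul _ hS_det, one_mul, mul_nonsing_inv _ hS_det]

end Matrix

theorem attenuator_contraction_general
    {s : ℕ} (K μ : Matrix (Fin s) (Fin s) ℂ)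
    (h₁ : (μ - (1/2 : ℂ) • (1 - K * Kᴴ)).PosSemidef)
    (h₂ : (μ + (1/2 : ℂ) • (1 - K * Kᴴ)).PosSemidef)
    (hpos : (μ + (1/2 : ℂ) • (K * Kᴴ + 1)).PosSemidef)
    (K₁ : Matrix (Fin s) (Fin s) ℂ) (hK₁ : K₁ = hpos.sqrt⁻¹ * K) :
    (1 - K₁ᴴ * K₁).PosSemidef := by
  have hM : (μ + (1/2 : ℂ) • (K * Kᴴ + 1)).PosDef := by
    convert PosDef.posSemidef_add h₁ PosDef.one using 1
    module
  have hS_det : IsUnit hpos.sqrt.det := by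
    rw [← isUnit_iff_isUnit_det]
    refine isUnit_of_mul_isUnit_left (y := hpos.sqrt) ?_
    rwa [hpos.sqrt_mul_self, ← hpos.posDef_iff_isUnit]
  have hKK : (hpos.sqrt * hpos.sqrt - K * Kᴴ).PosSemidef := by
    convert h₂ using 1
    rw [hpos.sqrt_mul_self]
    module
  subst hK₁
  exact hpos.posSemidef_sqrt.isHermitian.posSemidef_one_sub_conjTranspose_mul_self_inv_mul
    hS_det hKK

theorem attenuator_contraction
    {s : ℕ} (K μ : Matrix (Fin s) (Fin s) ℂ) (hμ : μ.IsHermitian)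
    (h₁ : (μ - (1/2 : ℂ) • (1 - K * Kᴴ)).PosSemidef)
    (h₂ : (μ + (1/2 : ℂ) • (1 - K * Kᴴ)).PosSemidef)
    (hpos : (μ + (1/2 : ℂ) • (K * Kᴴ + 1)).PosSemidef)
    (K₁ : Matrix (Fin s) (Fin s) ℂ) (hK₁ : K₁ = hpos.sqrt⁻¹ * K) :
    (1 - K₁ᴴ * K₁).PosSemidef :=
  attenuator_contraction_general K μ h₁ h₂ hpos K₁ hK₁
end

section
/- Let P be a projection on a Hilbert space H̃ with range H, let R be a bounded self-adjoint operator on H̃, and f a concave function with f(0)=0 defined on an interval containing the spectrum of R and of PRP. Then Tr P f(R) P ≤ Tr f(PRP), whenever both sides are well-defined (e.g., in finite dimensions). -/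
open Set Matrix
open scoped ComplexOrder

/-!
Jensen's inequality for the spectral measure of a vector: if `A` is Hermitian with eigenbasis
`uᵢ` and `‖x‖ ≤ 1`, the weights `|⟨uᵢ, x⟩|²` have total mass `‖x‖² ≤ 1`; putting the missing
mass at `0`, where `f` vanishes, concavity gives `⟨x, f(A) x⟩ ≤ f ⟨x, A x⟩`. Computing both traces
in an eigenbasis `vⱼ` of `PRP` and applying this to `A = R`, `x = P vⱼ` (so `‖x‖ ≤ 1`) gives
`Tr P f(R) P = ∑ ⟨P vⱼ, f(R) P vⱼ⟩ ≤ ∑ f ⟨vⱼ, PRP vⱼ⟩ = ∑ f(μⱼ) = Tr f(PRP)`.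
-/

theorem ConcaveOn.le_map_sum_of_sum_le_one {𝕜 E β ι : Type*} [Field 𝕜] [LinearOrder 𝕜]
    [IsStrictOrderedRing 𝕜] [AddCommGroup E] [AddCommGroup β] [PartialOrder β]
    [IsOrderedAddMonoid β] [Module 𝕜 E] [Module 𝕜 β] [IsStrictOrderedModule 𝕜 β]
    {s : Set E} {f : E → β} (hf : ConcaveOn 𝕜 s f) (hs : 0 ∈ s) (hf0 : f 0 = 0)
    {t : Finset ι} {w : ι → 𝕜} {p : ι → E} (hw : ∀ i ∈ t, 0 ≤ w i) (hw₁ : ∑ i ∈ t, w i ≤ 1)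
    (hp : ∀ i ∈ t, p i ∈ s) :
    ∑ i ∈ t, w i • f (p i) ≤ f (∑ i ∈ t, w i • p i) := by
  simpa [hf0] using hf.map_add_sum_le hw (sub_add_cancel 1 _) hp (sub_nonneg.2 hw₁) hs

namespace Matrix

variable {𝕜 n : Type*} [RCLike 𝕜] [Fintype n]

theorem trace_eq_sum_star_dotProduct_mulVec [DecidableEq n] (A : Matrix n n 𝕜)
    (b : OrthonormalBasis n 𝕜 (EuclideanSpace 𝕜 n)) :
    A.trace = ∑ j, star ⇑(b j) ⬝ᵥ (A *ᵥ ⇑(b j)) := by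
  rw [← trace_toLin_eq A (EuclideanSpace.basisFun n 𝕜).toBasis,
    ← toEuclideanLin_eq_toLin_orthonormal, LinearMap.trace_eq_sum_inner _ b]
  simp [EuclideanSpace.inner_eq_star_dotProduct, dotProduct_comm]

theorem star_dotProduct_conjTranspose_mul_mul_mulVec (C B : Matrix n n 𝕜) (x : n → 𝕜) :
    star x ⬝ᵥ ((Cᴴ * B * C) *ᵥ x) = star (C *ᵥ x) ⬝ᵥ (B *ᵥ (C *ᵥ x)) := by
  rw [star_mulVec, ← dotProduct_mulVec, mulVec_mulVec, mulVec_mulVec]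

theorem re_star_dotProduct_diagonal_mulVec [DecidableEq n] (d : n → ℝ) (y : n → 𝕜) :
    RCLike.re (star y ⬝ᵥ (diagonal (fun i => (d i : 𝕜)) *ᵥ y)) = ∑ i, ‖y i‖ ^ 2 * d i := by
  simp only [dotProduct, mulVec_diagonal, map_sum, Pi.star_apply]
  refine Finset.sum_congr rfl fun i _ => ?_
  rw [mul_left_comm, RCLike.star_def, RCLike.conj_mul, ← RCLike.ofReal_pow, ← RCLike.ofReal_mul,
    RCLike.ofReal_re, mul_comm]

namespace IsHermitian

variable [DecidableEq n]

theorem re_star_mulVec_dotProduct_mulVec_le_of_mul_self {P : Matrix n n 𝕜} (hP : P.IsHermitian)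
    (hP2 : P * P = P) (x : n → 𝕜) :
    RCLike.re (star (P *ᵥ x) ⬝ᵥ (P *ᵥ x)) ≤ RCLike.re (star x ⬝ᵥ x) := by
  have hQ : (1 - P)ᴴ * (1 - P) = 1 - P := by
    rw [conjTranspose_sub, conjTranspose_one, hP.eq, sub_mul, mul_sub, mul_sub, hP2]; simp
  have hPx : star (P *ᵥ x) ⬝ᵥ (P *ᵥ x) = star x ⬝ᵥ (P *ᵥ x) := by
    simpa [hP.eq, hP2] using (star_dotProduct_conjTranspose_mul_mul_mulVec P 1 x).symm
  have h1P := (hQ ▸ posSemidef_conjTranspose_mul_self (1 - P)).re_dotProduct_nonneg x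
  rw [sub_mulVec, one_mulVec, dotProduct_sub, map_sub] at h1P
  rw [hPx]
  linarith

variable {A : Matrix n n 𝕜} (hA : A.IsHermitian)

theorem trace_cfc (f : ℝ → ℝ) : (hA.cfc f).trace = ∑ i, (f (hA.eigenvalues i) : 𝕜) := by
  rw [IsHermitian.cfc, Unitary.conjStarAlgAut_apply, trace_mul_cycle, Unitary.coe_star_mul_self,
    one_mul, trace_diagonal]
  rfl

theorem re_star_dotProduct_cfc_mulVec (f : ℝ → ℝ) (x : n → 𝕜) :
    RCLike.re (star x ⬝ᵥ (hA.cfc f *ᵥ x)) =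
      ∑ i, ‖(star (hA.eigenvectorUnitary : Matrix n n 𝕜) *ᵥ x) i‖ ^ 2 * f (hA.eigenvalues i) := by
  rw [← re_star_dotProduct_diagonal_mulVec, ← star_dotProduct_conjTranspose_mul_mul_mulVec,
    ← star_eq_conjTranspose, star_star]
  rfl

theorem re_star_dotProduct_mulVec (x : n → 𝕜) :
    RCLike.re (star x ⬝ᵥ (A *ᵥ x)) =
      ∑ i, ‖(star (hA.eigenvectorUnitary : Matrix n n 𝕜) *ᵥ x) i‖ ^ 2 * hA.eigenvalues i := by
  conv_lhs => rw [hA.spectral_theorem]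
  exact hA.re_star_dotProduct_cfc_mulVec id x

theorem sum_norm_sq_star_eigenvectorUnitary_mulVec (x : n → 𝕜) :
    ∑ i, ‖(star (hA.eigenvectorUnitary : Matrix n n 𝕜) *ᵥ x) i‖ ^ 2 = RCLike.re (star x ⬝ᵥ x) := by
  have h := hA.re_star_dotProduct_cfc_mulVec (fun _ => 1) x
  rw [← hA.cfc_eq, cfc_const_one ℝ A, one_mulVec] at h
  simpa only [mul_one] using h.symm

theorem re_star_dotProduct_cfc_mulVec_le {s : Set ℝ} {f : ℝ → ℝ} (hf : ConcaveOn ℝ s f)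
    (hs : 0 ∈ s) (hf0 : f 0 = 0) (hspec : ∀ i, hA.eigenvalues i ∈ s) {x : n → 𝕜}
    (hx : RCLike.re (star x ⬝ᵥ x) ≤ 1) :
    RCLike.re (star x ⬝ᵥ (hA.cfc f *ᵥ x)) ≤ f (RCLike.re (star x ⬝ᵥ (A *ᵥ x))) := by
  rw [← hA.sum_norm_sq_star_eigenvectorUnitary_mulVec] at hx
  rw [hA.re_star_dotProduct_cfc_mulVec, hA.re_star_dotProduct_mulVec]
  simpa only [smul_eq_mul] using
    hf.le_map_sum_of_sum_le_one hs hf0 (fun i _ => by positivity) hx (fun i _ => hspec i)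

end IsHermitian
end Matrix

theorem trace_projection_concave_ineq_general
    {d : ℕ} (P R : Matrix (Fin d) (Fin d) ℂ)
    (hPproj : P.IsHermitian ∧ P * P = P) (hR : R.IsHermitian)
    (hPRP : (P * R * P).IsHermitian)
    (a b : ℝ) (h0 : (0:ℝ) ∈ Icc a b)
    (f : ℝ → ℝ) (hf : ConcaveOn ℝ (Icc a b) f) (hf0 : f 0 = 0)
    (hspecR : ∀ i, hR.eigenvalues i ∈ Icc a b) :
    ((P * hR.cfc f * P).trace).re ≤ ((hPRP.cfc f).trace).re := by
  obtain ⟨hP, hP2⟩ := hPproj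
  let v := hPRP.eigenvectorBasis
  rw [trace_eq_sum_star_dotProduct_mulVec _ v, hPRP.trace_cfc, Complex.re_sum, Complex.re_sum]
  refine Finset.sum_le_sum fun j _ => ?_
  have hv : RCLike.re (star ⇑(v j) ⬝ᵥ ⇑(v j)) = 1 := by
    rw [dotProduct_comm, ← EuclideanSpace.inner_eq_star_dotProduct, inner_self_eq_norm_sq_to_K,
      v.orthonormal.1 j]
    simp
  have hPv := hP.re_star_mulVec_dotProduct_mulVec_le_of_mul_self hP2 (v j)
  calc (star ⇑(v j) ⬝ᵥ ((P * hR.cfc f * P) *ᵥ ⇑(v j))).re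
      = RCLike.re (star (P *ᵥ v j) ⬝ᵥ (hR.cfc f *ᵥ (P *ᵥ v j))) := by
        rw [← star_dotProduct_conjTranspose_mul_mul_mulVec, hP.eq]; rfl
    _ ≤ f (RCLike.re (star (P *ᵥ v j) ⬝ᵥ (R *ᵥ (P *ᵥ v j)))) :=
        hR.re_star_dotProduct_cfc_mulVec_le hf h0 hf0 hspecR (hPv.trans hv.le)
    _ = f (hPRP.eigenvalues j) := by
        rw [← star_dotProduct_conjTranspose_mul_mul_mulVec, hP.eq, hPRP.eigenvalues_eq]
    _ = ((f (hPRP.eigenvalues j) : ℂ)).re := (Complex.ofReal_re _).symm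

theorem trace_projection_concave_ineq
    {d : ℕ} (P R : Matrix (Fin d) (Fin d) ℂ)
    (hPproj : P.IsHermitian ∧ P * P = P) (hR : R.IsHermitian)
    (hPRP : (P * R * P).IsHermitian)
    (a b : ℝ) (hab : a ≤ b) (h0 : (0:ℝ) ∈ Icc a b)
    (f : ℝ → ℝ) (hf : ConcaveOn ℝ (Icc a b) f) (hf0 : f 0 = 0)
    (hspecR : ∀ i, hR.eigenvalues i ∈ Icc a b)
    (hspecPRP : ∀ i, hPRP.eigenvalues i ∈ Icc a b) :
    ((P * hR.cfc f * P).trace).re ≤ ((hPRP.cfc f).trace).re :=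
  trace_projection_concave_ineq_general P R hPproj hR hPRP a b h0 f hf hf0 hspecR
end

section
/- Let (X, μ) be a σ-finite measure space and x ↦ P(x) a measurable family of density matrices on a finite-dimensional Hilbert space H with ∫ P(x) dμ(x) = I. Let ρ be a density matrix and define p̄(x) = Tr ρ P(x). Then p̄ is a probability density (nonnegative, bounded by 1, integrating to 1), and for every concave f : [0,1] → ℝ with f(0)=0: Tr f(ρ) ≤ ∫ f(p̄(x)) dμ(x). -/
open Set Matrix MeasureTheory
open scoped ComplexOrder

/-!
Diagonalize `ρ = ∑ λᵢ |uᵢ⟩⟨uᵢ|` and put `qᵢ(x) = ⟨uᵢ, P(x) uᵢ⟩`, so that `p̄(x) = ∑ λᵢ qᵢ(x)`.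
Since `P(x)` is a density matrix, the `qᵢ(x)` are convex weights for every `x`, and since
`∫ P = I`, every `qᵢ` has total mass `⟨uᵢ, uᵢ⟩ = 1`. Hence `p̄(x) ∈ [0, 1]`, `∫ p̄ = ∑ λᵢ = 1`,
and integrating Jensen's inequality `∑ qᵢ(x) f(λᵢ) ≤ f(p̄(x))` gives `∑ f(λᵢ) ≤ ∫ f ∘ p̄`.
-/

theorem ConcaveOn.sum_le_integral_comp_sum_mul {X ι : Type*} [MeasurableSpace X] {μ : Measure X}
    [Fintype ι] {s : Set ℝ} {f : ℝ → ℝ} (hf : ConcaveOn ℝ s f) {p : ι → ℝ} (hp : ∀ i, p i ∈ s)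
    {q : ι → X → ℝ} (hq_nonneg : ∀ i x, 0 ≤ q i x) (hq_sum : ∀ x, ∑ i, q i x = 1)
    (hq_int : ∀ i, Integrable (q i) μ) (hq_mass : ∀ i, ∫ x, q i x ∂μ = 1)
    (hf_int : Integrable (fun x => f (∑ i, p i * q i x)) μ) :
    ∑ i, f (p i) ≤ ∫ x, f (∑ i, p i * q i x) ∂μ := by
  have hjensen (x : X) : ∑ i, f (p i) * q i x ≤ f (∑ i, p i * q i x) := by
    simpa only [smul_eq_mul, mul_comm] using
      hf.le_map_sum (t := Finset.univ) (fun i _ => hq_nonneg i x) (hq_sum x) (fun i _ => hp i)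
  calc ∑ i, f (p i) = ∫ x, ∑ i, f (p i) * q i x ∂μ := by
        simp [integral_finsetSum _ fun i _ => (hq_int i).const_mul _, integral_const_mul, hq_mass]
    _ ≤ ∫ x, f (∑ i, p i * q i x) ∂μ :=
        integral_mono (integrable_finsetSum _ fun i _ => (hq_int i).const_mul _) hf_int hjensen

section Entrywise

variable {X m n 𝕜 : Type*} [MeasurableSpace X] {μ : Measure X} [RCLike 𝕜] [Fintype n]
  {P : X → Matrix n n 𝕜}

theorem integrable_mul_mul_apply (hP : ∀ i j, Integrable (fun x => P x i j) μ)
    (A : Matrix m n 𝕜) (B : Matrix n m 𝕜) (i j : m) :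
    Integrable (fun x => (A * P x * B) i j) μ := by
  simp only [mul_apply]
  exact integrable_finsetSum _ fun k _ =>
    (integrable_finsetSum _ fun l _ => (hP l k).const_mul _).mul_const _

theorem integral_mul_mul_apply (hP : ∀ i j, Integrable (fun x => P x i j) μ)
    (A : Matrix m n 𝕜) (B : Matrix n m 𝕜) (i j : m) :
    ∫ x, (A * P x * B) i j ∂μ = (A * Matrix.of (fun k l => ∫ x, P x k l ∂μ) * B) i j := by
  simp only [mul_apply, of_apply]
  rw [integral_finsetSum _ fun k _ =>
    (integrable_finsetSum _ fun l _ => (hP l k).const_mul _).mul_const _]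
  refine Finset.sum_congr rfl fun k _ => ?_
  rw [integral_mul_const, integral_finsetSum _ fun l _ => (hP l k).const_mul _]
  simp only [integral_const_mul]

end Entrywise

section ConjDiag

variable {X n 𝕜 : Type*} [MeasurableSpace X] {μ : Measure X} [RCLike 𝕜] [Fintype n]
  [DecidableEq n] {P : X → Matrix n n 𝕜}

/-- `⟪uᵢ, σ uᵢ⟫` for the `i`-th column `uᵢ` of `U`. -/
noncomputable def conjDiag (U : unitaryGroup n 𝕜) (σ : Matrix n n 𝕜) (i : n) : ℝ :=
  RCLike.re ((star (U : Matrix n n 𝕜) * σ * U) i i)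

theorem conjDiag_nonneg {σ : Matrix n n 𝕜} (hσ : σ.PosSemidef) (U : unitaryGroup n 𝕜) (i : n) :
    0 ≤ conjDiag U σ i := by
  have h := (hσ.conjTranspose_mul_mul_same (U : Matrix n n 𝕜)).diag_nonneg (i := i)
  exact (RCLike.nonneg_iff.mp h).1

theorem sum_conjDiag (U : unitaryGroup n 𝕜) (σ : Matrix n n 𝕜) :
    ∑ i, conjDiag U σ i = RCLike.re σ.trace := by
  calc ∑ i, conjDiag U σ i = RCLike.re (star (U : Matrix n n 𝕜) * σ * U).trace := by
        simp only [conjDiag, trace, diag_apply, map_sum]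
    _ = RCLike.re σ.trace := by
        rw [trace_mul_cycle, Unitary.mul_star_self_of_mem U.2, one_mul]

theorem integrable_conjDiag (hP : ∀ i j, Integrable (fun x => P x i j) μ)
    (U : unitaryGroup n 𝕜) (i : n) : Integrable (fun x => conjDiag U (P x) i) μ :=
  (integrable_mul_mul_apply hP _ _ i i).re

theorem integral_conjDiag_of_integral_eq_one (hP : ∀ i j, Integrable (fun x => P x i j) μ)
    (hP_one : ∀ i j, ∫ x, P x i j ∂μ = (1 : Matrix n n 𝕜) i j) (U : unitaryGroup n 𝕜) (i : n) :
    ∫ x, conjDiag U (P x) i ∂μ = 1 := by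
  have h_of : Matrix.of (fun k l => ∫ x, P x k l ∂μ) = 1 := Matrix.ext hP_one
  simp only [conjDiag]
  rw [integral_re (integrable_mul_mul_apply hP _ _ i i), integral_mul_mul_apply hP, h_of, mul_one,
    Unitary.star_mul_self_of_mem U.2, one_apply_eq, RCLike.one_re]

theorem Matrix.IsHermitian.re_trace_mul_eq_sum_eigenvalues_mul {A : Matrix n n 𝕜}
    (hA : A.IsHermitian) (σ : Matrix n n 𝕜) :
    RCLike.re (A * σ).trace = ∑ i, hA.eigenvalues i * conjDiag hA.eigenvectorUnitary σ i := by
  conv_lhs => rw [hA.spectral_theorem, Unitary.conjStarAlgAut_apply]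
  rw [mul_assoc, mul_assoc, trace_mul_comm, mul_assoc, trace, map_sum]
  simp only [diag_apply, diagonal_mul, Function.comp_apply, RCLike.re_ofReal_mul, conjDiag,
    Matrix.mul_assoc]

end ConjDiag

namespace IsDensityMatrix

variable {d : ℕ} {ρ : Matrix (Fin d) (Fin d) ℂ}

theorem sum_eigenvalues (hρ : IsDensityMatrix ρ) : ∑ i, hρ.1.1.eigenvalues i = 1 := by
  have h : ((∑ i, hρ.1.1.eigenvalues i : ℝ) : ℂ) = 1 := by
    push_cast
    exact hρ.1.1.trace_eq_sum_eigenvalues.symm.trans hρ.2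
  exact_mod_cast h

theorem eigenvalues_mem_Icc (hρ : IsDensityMatrix ρ) (i : Fin d) :
    hρ.1.1.eigenvalues i ∈ Icc (0 : ℝ) 1 :=
  ⟨hρ.1.eigenvalues_nonneg i, hρ.sum_eigenvalues ▸
    Finset.single_le_sum (fun j _ => hρ.1.eigenvalues_nonneg j) (Finset.mem_univ i)⟩

end IsDensityMatrix

theorem upper_berezin_lieb_general
    {d : ℕ} {X : Type*} [MeasurableSpace X] (μ : Measure X)
    (P : X → Matrix (Fin d) (Fin d) ℂ)
    (hPdm : ∀ x, IsDensityMatrix (P x))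
    (hPint : ∀ i j, Integrable (fun x => P x i j) μ)
    (hPres : ∀ i j, ∫ x, P x i j ∂μ = (1 : Matrix (Fin d) (Fin d) ℂ) i j)
    (ρ : Matrix (Fin d) (Fin d) ℂ) (hρ : IsDensityMatrix ρ)
    (f : ℝ → ℝ) (hf : ConcaveOn ℝ (Icc (0:ℝ) 1) f)
    (hfint : Integrable (fun x => f (((ρ * P x).trace).re)) μ) :
    (∀ x, ((ρ * P x).trace).re ∈ Icc (0:ℝ) 1) ∧
    (∫ x, ((ρ * P x).trace).re ∂μ) = 1 ∧
    trF f ρ ≤ ∫ x, f (((ρ * P x).trace).re) ∂μ := by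
  set U := hρ.1.1.eigenvectorUnitary
  set p := hρ.1.1.eigenvalues
  set q : Fin d → X → ℝ := fun i x => conjDiag U (P x) i
  have hpbar : ∀ x, ((ρ * P x).trace).re = ∑ i, p i * q i x :=
    fun x => hρ.1.1.re_trace_mul_eq_sum_eigenvalues_mul (P x)
  have hq_nonneg : ∀ i x, 0 ≤ q i x := fun i x => conjDiag_nonneg (hPdm x).1 U i
  have hq_sum : ∀ x, ∑ i, q i x = 1 := fun x => by simp [q, sum_conjDiag, (hPdm x).2]
  have hq_int : ∀ i, Integrable (q i) μ := integrable_conjDiag hPint U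
  have hq_mass : ∀ i, ∫ x, q i x ∂μ = 1 := integral_conjDiag_of_integral_eq_one hPint hPres U
  simp only [hpbar] at hfint ⊢
  refine ⟨fun x => ?_, ?_, ?_⟩
  · simpa only [smul_eq_mul, mul_comm] using (convex_Icc (0 : ℝ) 1).sum_mem
      (fun i _ => hq_nonneg i x) (hq_sum x) (fun i _ => hρ.eigenvalues_mem_Icc i)
  · simp [integral_finsetSum _ fun i _ => (hq_int i).const_mul _, integral_const_mul, hq_mass,
      p, hρ.sum_eigenvalues]
  · rw [trF, dif_pos hρ.1.1]
    exact hf.sum_le_integral_comp_sum_mul hρ.eigenvalues_mem_Icc hq_nonneg hq_sum hq_int hq_mass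
      hfint

theorem upper_berezin_lieb
    {d : ℕ} {X : Type*} [MeasurableSpace X] (μ : Measure X) [SigmaFinite μ]
    (P : X → Matrix (Fin d) (Fin d) ℂ)
    (hPdm : ∀ x, IsDensityMatrix (P x))
    (hPint : ∀ i j, Integrable (fun x => P x i j) μ)
    (hPres : ∀ i j, ∫ x, P x i j ∂μ = (1 : Matrix (Fin d) (Fin d) ℂ) i j)
    (ρ : Matrix (Fin d) (Fin d) ℂ) (hρ : IsDensityMatrix ρ)
    (f : ℝ → ℝ) (hf : ConcaveOn ℝ (Icc (0:ℝ) 1) f) (hf0 : f 0 = 0)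
    (hfint : Integrable (fun x => f (((ρ * P x).trace).re)) μ) :
    (∀ x, ((ρ * P x).trace).re ∈ Icc (0:ℝ) 1) ∧
    (∫ x, ((ρ * P x).trace).re ∂μ) = 1 ∧
    trF f ρ ≤ ∫ x, f (((ρ * P x).trace).re) ∂μ :=
  upper_berezin_lieb_general μ P hPdm hPint hPres ρ hρ f hf hfint
end

section
/- Let (X, μ) be a σ-finite measure space, P(x) density matrices on finite-dimensional H with ∫ P(x) dμ(x) = I, and suppose ρ = ∫ p(x) P(x) dμ(x) for a bounded probability density p. Then for every concave f : [0, sup p] → ℝ with f(0)=0: ∫ f(p(x)) dμ(x) ≤ Tr f(ρ). -/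
open Set Matrix MeasureTheory
open scoped ComplexOrder

/-! Diagonalise `ρ = ∑ᵢ λᵢ |uᵢ⟩⟨uᵢ|`. The functions `qᵢ x = ⟨uᵢ, P x uᵢ⟩` are nonnegative, sum to
`tr P x = 1` at every point, and are probability densities for `μ` because `∫ P = 1`; moreover
`λᵢ = ∫ p qᵢ dμ`. Hence `∫ f ∘ p = ∑ᵢ ∫ (f ∘ p) qᵢ ≤ ∑ᵢ f (∫ p qᵢ) = ∑ᵢ f λᵢ` by Jensen's
inequality for each probability measure `qᵢ μ`. -/

lemma ConvexOn.exists_add_mul_sub_le {S : Set ℝ} {f : ℝ → ℝ} (hf : ConvexOn ℝ S f) {c : ℝ}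
    (hc : c ∈ interior S) : ∃ s, ∀ t ∈ S, f c + s * (t - c) ≤ f t := by
  refine ⟨derivWithin f (Ioi c) c, fun t ht => ?_⟩
  rcases lt_trichotomy t c with htc | rfl | hct
  · have h := (hf.slope_le_leftDeriv_of_mem_interior ht hc htc).trans
      (hf.leftDeriv_le_rightDeriv_of_mem_interior hc)
    rw [slope_def_field, div_le_iff₀ (sub_pos.2 htc)] at h
    linarith
  · simp
  · have h := hf.rightDeriv_le_slope_of_mem_interior hc ht hct
    rw [slope_def_field, le_div_iff₀ (sub_pos.2 hct)] at h
    linarith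

lemma ConcaveOn.exists_le_add_mul_sub {S : Set ℝ} {f : ℝ → ℝ} (hf : ConcaveOn ℝ S f) {c : ℝ}
    (hc : c ∈ interior S) : ∃ s, ∀ t ∈ S, f t ≤ f c + s * (t - c) := by
  obtain ⟨s, hs⟩ := hf.neg.exists_add_mul_sub_le hc
  refine ⟨-s, fun t ht => ?_⟩
  have h := hs t ht
  simp only [Pi.neg_apply] at h
  linarith

section WeightedJensen

variable {X : Type*} [MeasurableSpace X] {μ : Measure X} {g q : X → ℝ}

lemma integral_comp_mul_eq_of_ae_eq (F : ℝ → ℝ) {e : ℝ} (hq1 : ∫ x, q x ∂μ = 1)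
    (h : ∀ᵐ x ∂μ, q x ≠ 0 → g x = e) : ∫ x, F (g x) * q x ∂μ = F e := by
  have hF : (fun x => F (g x) * q x) =ᵐ[μ] fun x => F e * q x := by
    filter_upwards [h] with x hx
    by_cases hqx : q x = 0
    · rw [hqx, mul_zero, mul_zero]
    · rw [hx hqx]
  rw [integral_congr_ae hF, integral_const_mul, hq1, mul_one]

theorem ConcaveOn.integral_comp_mul_le {a b : ℝ} {f : ℝ → ℝ} (hf : ConcaveOn ℝ (Icc a b) f)
    (hg : ∀ x, g x ∈ Icc a b) (hq0 : ∀ x, 0 ≤ q x) (hq : Integrable q μ)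
    (hq1 : ∫ x, q x ∂μ = 1) (hgq : Integrable (fun x => g x * q x) μ)
    (hfgq : Integrable (fun x => f (g x) * q x) μ) :
    ∫ x, f (g x) * q x ∂μ ≤ f (∫ x, g x * q x ∂μ) := by
  set c := ∫ x, g x * q x ∂μ
  have hint : ∀ e, Integrable (fun x => (g x - e) * q x) μ := fun e => by
    simp only [sub_mul]
    exact hgq.sub (hq.const_mul e)
  have hsub : ∀ e, ∫ x, (g x - e) * q x ∂μ = c - e := fun e => by
    simp only [sub_mul]
    rw [integral_sub hgq (hq.const_mul e), integral_const_mul, hq1, mul_one]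
  have hga : ∀ x, 0 ≤ (g x - a) * q x := fun x => mul_nonneg (sub_nonneg.2 (hg x).1) (hq0 x)
  have hgb : ∀ x, 0 ≤ -((g x - b) * q x) := fun x => by
    rw [← neg_mul, neg_sub]; exact mul_nonneg (sub_nonneg.2 (hg x).2) (hq0 x)
  have hac : a ≤ c := sub_nonneg.1 (hsub a ▸ integral_nonneg hga)
  have hcb : c ≤ b := by
    have : 0 ≤ ∫ x, -((g x - b) * q x) ∂μ := integral_nonneg hgb
    rw [integral_neg, hsub] at this
    linarith
  -- `f` may jump at the endpoints, where there is no supporting line; but if `c` is an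
  -- endpoint, then `g = c` almost everywhere on `{q ≠ 0}`.
  rcases hac.eq_or_lt with rfl | hac
  · refine (integral_comp_mul_eq_of_ae_eq f hq1 ?_).le
    filter_upwards [(integral_eq_zero_iff_of_nonneg hga (hint _)).1 (by rw [hsub, sub_self])]
      with x hx hqx
    exact sub_eq_zero.1 ((mul_eq_zero.1 hx).resolve_right hqx)
  rcases hcb.eq_or_lt with hcb | hcb
  · refine (integral_comp_mul_eq_of_ae_eq f hq1 ?_).le
    filter_upwards [(integral_eq_zero_iff_of_nonneg hgb (hint b).neg).1
      (by rw [integral_neg, hsub, hcb, sub_self, neg_zero])] with x hx hqx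
    rw [hcb]
    exact sub_eq_zero.1 ((mul_eq_zero.1 (neg_eq_zero.1 hx)).resolve_right hqx)
  obtain ⟨s, hs⟩ := hf.exists_le_add_mul_sub (c := c) (by rw [interior_Icc]; exact ⟨hac, hcb⟩)
  calc ∫ x, f (g x) * q x ∂μ ≤ ∫ x, f c * q x + s * ((g x - c) * q x) ∂μ :=
        integral_mono hfgq ((hq.const_mul _).add ((hint c).const_mul s)) fun x => by
          nlinarith [hs (g x) (hg x), hq0 x]
    _ = f c := by
        rw [integral_add (hq.const_mul _) ((hint c).const_mul s), integral_const_mul,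
          integral_const_mul, hsub, hq1]
        ring

end WeightedJensen

section OrthonormalBasis

variable {𝕜 ι n : Type*} [RCLike 𝕜] [Fintype ι] [Fintype n]

lemma OrthonormalBasis.star_dotProduct_self (b : OrthonormalBasis ι 𝕜 (EuclideanSpace 𝕜 n))
    (i : ι) : star ⇑(b i) ⬝ᵥ ⇑(b i) = 1 := by
  rw [dotProduct_comm, ← EuclideanSpace.inner_eq_star_dotProduct, inner_self_eq_norm_sq_to_K,
    b.orthonormal.1 i]
  simp

lemma OrthonormalBasis.sum_star_dotProduct_mulVec [DecidableEq n]
    (b : OrthonormalBasis ι 𝕜 (EuclideanSpace 𝕜 n)) (B : Matrix n n 𝕜) :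
    ∑ i, star ⇑(b i) ⬝ᵥ B *ᵥ ⇑(b i) = B.trace := by
  rw [← trace_toLin_eq B (EuclideanSpace.basisFun n 𝕜).toBasis,
    ← toEuclideanLin_eq_toLin_orthonormal, LinearMap.trace_eq_sum_inner _ b]
  refine Finset.sum_congr rfl fun i _ => ?_
  rw [EuclideanSpace.inner_eq_star_dotProduct, dotProduct_comm]
  rfl

end OrthonormalBasis

section StateDensity

variable {X 𝕜 n : Type*} [RCLike 𝕜] [Fintype n] {A : X → Matrix n n 𝕜}

/-- For a POVM density `A` and a unit vector `v`, the density of the outcome distribution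
in the pure state `v`. -/
noncomputable def stateDensity (A : X → Matrix n n 𝕜) (v : n → 𝕜) (x : X) : ℝ :=
  RCLike.re (star v ⬝ᵥ A x *ᵥ v)

lemma stateDensity_nonneg (hA : ∀ x, (A x).PosSemidef) (v : n → 𝕜) (x : X) :
    0 ≤ stateDensity A v x :=
  (hA x).re_dotProduct_nonneg v

lemma stateDensity_smul (c : X → ℝ) (v : n → 𝕜) (x : X) :
    stateDensity (fun x => c x • A x) v x = c x * stateDensity A v x := by
  simp only [stateDensity, smul_mulVec, dotProduct_smul, RCLike.smul_re]

lemma sum_stateDensity [DecidableEq n] {ι : Type*} [Fintype ι]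
    (b : OrthonormalBasis ι 𝕜 (EuclideanSpace 𝕜 n)) (x : X) :
    ∑ i, stateDensity A ⇑(b i) x = RCLike.re (A x).trace := by
  simp only [stateDensity, ← map_sum, b.sum_star_dotProduct_mulVec]

variable [MeasurableSpace X] {μ : Measure X}

lemma integrable_dotProduct_mulVec (hA : ∀ i j, Integrable (fun x => A x i j) μ) (w v : n → 𝕜) :
    Integrable (fun x => w ⬝ᵥ A x *ᵥ v) μ := by
  simp only [dotProduct, mulVec, Finset.mul_sum]
  exact integrable_finsetSum _ fun i _ => integrable_finsetSum _ fun j _ =>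
    ((hA i j).mul_const _).const_mul _

lemma integral_dotProduct_mulVec (hA : ∀ i j, Integrable (fun x => A x i j) μ) (w v : n → 𝕜) :
    ∫ x, w ⬝ᵥ A x *ᵥ v ∂μ = w ⬝ᵥ (of fun i j => ∫ x, A x i j ∂μ) *ᵥ v := by
  simp only [dotProduct, mulVec, Finset.mul_sum, of_apply]
  rw [integral_finsetSum _ fun i _ => integrable_finsetSum _ fun j _ =>
    ((hA i j).mul_const _).const_mul _]
  refine Finset.sum_congr rfl fun i _ => ?_
  rw [integral_finsetSum _ fun j _ => ((hA i j).mul_const _).const_mul _]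
  refine Finset.sum_congr rfl fun j _ => ?_
  rw [integral_const_mul, integral_mul_const]

lemma integrable_stateDensity (hA : ∀ i j, Integrable (fun x => A x i j) μ) (v : n → 𝕜) :
    Integrable (stateDensity A v) μ :=
  (integrable_dotProduct_mulVec hA _ v).re

lemma integral_stateDensity (hA : ∀ i j, Integrable (fun x => A x i j) μ) (v : n → 𝕜) :
    ∫ x, stateDensity A v x ∂μ = RCLike.re (star v ⬝ᵥ (of fun i j => ∫ x, A x i j ∂μ) *ᵥ v) := by
  unfold stateDensity
  rw [integral_re (integrable_dotProduct_mulVec hA _ v), integral_dotProduct_mulVec hA]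

end StateDensity

theorem integral_comp_le_sum_comp_re_dotProduct {X 𝕜 n ι : Type*} [MeasurableSpace X]
    [RCLike 𝕜] [Fintype n] [DecidableEq n] [Fintype ι] (μ : Measure X)
    (P : X → Matrix n n 𝕜) (hPpsd : ∀ x, (P x).PosSemidef) (hPtr : ∀ x, (P x).trace = 1)
    (hPint : ∀ i j, Integrable (fun x => P x i j) μ)
    (hPres : ∀ i j, ∫ x, P x i j ∂μ = (1 : Matrix n n 𝕜) i j)
    (p : X → ℝ) (M : ℝ) (hp : ∀ x, p x ∈ Icc 0 M) (hpmeas : AEStronglyMeasurable p μ)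
    (ρ : Matrix n n 𝕜) (hρrep : ∀ i j, ρ i j = ∫ x, (p x : 𝕜) * P x i j ∂μ)
    (f : ℝ → ℝ) (hf : ConcaveOn ℝ (Icc 0 M) f) (hfint : Integrable (fun x => f (p x)) μ)
    (b : OrthonormalBasis ι 𝕜 (EuclideanSpace 𝕜 n)) :
    ∫ x, f (p x) ∂μ ≤ ∑ i, f (RCLike.re (star ⇑(b i) ⬝ᵥ ρ *ᵥ ⇑(b i))) := by
  set q : ι → X → ℝ := fun i => stateDensity P ⇑(b i)
  have hq0 : ∀ i x, 0 ≤ q i x := fun i => stateDensity_nonneg hPpsd _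
  have hqsum : ∀ x, ∑ i, q i x = 1 := fun x => by
    rw [sum_stateDensity, hPtr, RCLike.one_re]
  have hqint : ∀ i, Integrable (q i) μ := fun i => integrable_stateDensity hPint _
  have hq1 : ∀ i, ∫ x, q i x ∂μ = 1 := fun i => by
    have hP1 : (of fun i j => ∫ x, P x i j ∂μ) = 1 := by ext i j; exact hPres i j
    rw [integral_stateDensity hPint, hP1, one_mulVec, b.star_dotProduct_self, RCLike.one_re]
  have hpbound : ∀ᵐ x ∂μ, ‖p x‖ ≤ M := ae_of_all _ fun x => by
    rw [Real.norm_of_nonneg (hp x).1]; exact (hp x).2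
  have hpP : ∀ i j, Integrable (fun x => (p x • P x) i j) μ := fun i j =>
    (hPint i j).bdd_smul M hpmeas hpbound
  have hρ_eq : (of fun i j => ∫ x, (p x • P x) i j ∂μ) = ρ := by
    ext i j; simp only [of_apply, Matrix.smul_apply, RCLike.real_smul_eq_coe_mul, hρrep]
  have hdiag : ∀ i, RCLike.re (star ⇑(b i) ⬝ᵥ ρ *ᵥ ⇑(b i)) = ∫ x, p x * q i x ∂μ := fun i => by
    rw [← hρ_eq, ← integral_stateDensity hpP]
    simp only [q, stateDensity_smul]
  have hfq : ∀ i, Integrable (fun x => f (p x) * q i x) μ := fun i =>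
    hfint.mul_bdd (c := 1) (hqint i).1 <| ae_of_all _ fun x => by
      rw [Real.norm_of_nonneg (hq0 i x), ← hqsum x]
      exact Finset.single_le_sum (f := fun j => q j x) (fun j _ => hq0 j x) (Finset.mem_univ i)
  calc ∫ x, f (p x) ∂μ = ∑ i, ∫ x, f (p x) * q i x ∂μ := by
        rw [← integral_finsetSum _ fun i _ => hfq i]
        simp_rw [← Finset.mul_sum, hqsum, mul_one]
    _ ≤ ∑ i, f (RCLike.re (star ⇑(b i) ⬝ᵥ ρ *ᵥ ⇑(b i))) := Finset.sum_le_sum fun i _ => by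
        rw [hdiag]
        exact hf.integral_comp_mul_le hp (hq0 i) (hqint i) (hq1 i)
          ((hqint i).bdd_mul hpmeas hpbound) (hfq i)

theorem lower_berezin_lieb_general
    {d : ℕ} {X : Type*} [MeasurableSpace X] (μ : Measure X)
    (P : X → Matrix (Fin d) (Fin d) ℂ)
    (hPdm : ∀ x, IsDensityMatrix (P x))
    (hPint : ∀ i j, Integrable (fun x => P x i j) μ)
    (hPres : ∀ i j, ∫ x, P x i j ∂μ = (1 : Matrix (Fin d) (Fin d) ℂ) i j)
    (p : X → ℝ) (hp0 : ∀ x, 0 ≤ p x) (M : ℝ) (hpM : ∀ x, p x ≤ M)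
    (hpint : Integrable p μ)
    (ρ : Matrix (Fin d) (Fin d) ℂ) (hρ : IsDensityMatrix ρ)
    (hρrep : ∀ i j, ρ i j = ∫ x, (p x : ℂ) * P x i j ∂μ)
    (f : ℝ → ℝ) (hf : ConcaveOn ℝ (Icc (0:ℝ) M) f)
    (hfint : Integrable (fun x => f (p x)) μ) :
    (∫ x, f (p x) ∂μ) ≤ trF f ρ := by
  have hH : ρ.IsHermitian := hρ.1.1
  rw [trF, dif_pos hH]
  simp_rw [hH.eigenvalues_eq]
  exact integral_comp_le_sum_comp_re_dotProduct μ P (fun x => (hPdm x).1) (fun x => (hPdm x).2)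
    hPint hPres p M (fun x => ⟨hp0 x, hpM x⟩) hpint.1 ρ hρrep f hf hfint hH.eigenvectorBasis

theorem lower_berezin_lieb
    {d : ℕ} {X : Type*} [MeasurableSpace X] (μ : Measure X) [SigmaFinite μ]
    (P : X → Matrix (Fin d) (Fin d) ℂ)
    (hPdm : ∀ x, IsDensityMatrix (P x))
    (hPint : ∀ i j, Integrable (fun x => P x i j) μ)
    (hPres : ∀ i j, ∫ x, P x i j ∂μ = (1 : Matrix (Fin d) (Fin d) ℂ) i j)
    (p : X → ℝ) (hp0 : ∀ x, 0 ≤ p x) (M : ℝ) (hM : 1 ≤ M) (hpM : ∀ x, p x ≤ M)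
    (hpint : Integrable p μ) (hp1 : ∫ x, p x ∂μ = 1)
    (ρ : Matrix (Fin d) (Fin d) ℂ) (hρ : IsDensityMatrix ρ)
    (hρrep : ∀ i j, ρ i j = ∫ x, (p x : ℂ) * P x i j ∂μ)
    (f : ℝ → ℝ) (hf : ConcaveOn ℝ (Icc (0:ℝ) M) f) (hf0 : f 0 = 0)
    (hfint : Integrable (fun x => f (p x)) μ) :
    (∫ x, f (p x) ∂μ) ≤ trF f ρ :=
  lower_berezin_lieb_general μ P hPdm hPint hPres p hp0 M hpM hpint ρ hρ hρrep f hf hfint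
end

section
/- Let ρ be a self-adjoint positive semidefinite matrix with eigenvalues in [0,1] and P a density matrix. Then Tr(f(ρ)P) ≤ f(Tr(ρP)) for every concave function f on [0,1]. -/
/-!
Diagonalize `ρ = U diag(λ) U*`. With the weights `wᵢ = (U* P U)ᵢᵢ`, which are nonnegative
and sum to `Tr P = 1`, both sides become averages over the spectrum:
`Tr(f(ρ) P) = ∑ wᵢ f(λᵢ)` and `Tr(ρ P) = ∑ wᵢ λᵢ`. Since `0 ≤ ρ ≤ 1` puts every `λᵢ` in
`[0, 1]`, the claim is the finite Jensen inequality for the concave `f`.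
-/

open Set Matrix
open scoped ComplexOrder

namespace Matrix.IsHermitian

variable {n 𝕜 : Type*} [Fintype n] [DecidableEq n] [RCLike 𝕜] {A : Matrix n n 𝕜}
  (hA : A.IsHermitian)

noncomputable def spectralWeight (B : Matrix n n 𝕜) (i : n) : ℝ :=
  RCLike.re ((star (hA.eigenvectorUnitary : Matrix n n 𝕜) * B * hA.eigenvectorUnitary) i i)

lemma re_trace_cfc_mul (f : ℝ → ℝ) (B : Matrix n n 𝕜) :
    RCLike.re (hA.cfc f * B).trace = ∑ i, hA.spectralWeight B i * f (hA.eigenvalues i) := by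
  rw [IsHermitian.cfc, Unitary.conjStarAlgAut_apply, mul_assoc, mul_assoc, trace_mul_comm]
  simp only [spectralWeight, trace, diag, diagonal_mul, mul_assoc, Function.comp_apply, map_sum,
    RCLike.re_ofReal_mul]
  exact Finset.sum_congr rfl fun _ _ ↦ mul_comm _ _

lemma re_trace_mul (B : Matrix n n 𝕜) :
    RCLike.re (A * B).trace = ∑ i, hA.spectralWeight B i * hA.eigenvalues i := by
  conv_lhs => rw [hA.spectral_theorem]
  exact hA.re_trace_cfc_mul id B

lemma spectralWeight_nonneg {B : Matrix n n 𝕜} (hB : B.PosSemidef) (i : n) :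
    0 ≤ hA.spectralWeight B i :=
  RCLike.nonneg_iff.mp (hB.conjTranspose_mul_mul_same _).diag_nonneg |>.1

lemma sum_spectralWeight (B : Matrix n n 𝕜) :
    ∑ i, hA.spectralWeight B i = RCLike.re B.trace := by
  have hcycle := trace_mul_cycle (star (hA.eigenvectorUnitary : Matrix n n 𝕜)) B
    hA.eigenvectorUnitary
  rw [Unitary.mul_star_self_of_mem hA.eigenvectorUnitary.2, one_mul] at hcycle
  simp only [spectralWeight, ← map_sum, ← hcycle]
  rfl

lemma eigenvalues_le_one (h : (1 - A).PosSemidef) (i : n) : hA.eigenvalues i ≤ 1 := by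
  have := h.re_dotProduct_nonneg (hA.eigenvectorBasis i)
  rw [sub_mulVec, one_mulVec, dotProduct_sub, map_sub, ← hA.eigenvalues_eq, dotProduct_comm,
    ← EuclideanSpace.inner_eq_star_dotProduct, inner_self_eq_norm_sq_to_K,
    hA.eigenvectorBasis.orthonormal.1 i] at this
  simpa using this

end Matrix.IsHermitian

theorem trace_jensen_ineq
    {d : ℕ} (ρ P : Matrix (Fin d) (Fin d) ℂ)
    (hρ : ρ.PosSemidef) (hρ1 : ((1 : Matrix (Fin d) (Fin d) ℂ) - ρ).PosSemidef)
    (hP : P.PosSemidef) (hPtr : P.trace = 1)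
    (f : ℝ → ℝ) (hf : ConcaveOn ℝ (Icc (0:ℝ) 1) f) :
    ((hρ.1.cfc f * P).trace).re ≤ f (((ρ * P).trace).re) := by
  have heig : ∀ i ∈ Finset.univ, hρ.1.eigenvalues i ∈ Icc (0 : ℝ) 1 := fun i _ ↦
    ⟨hρ.eigenvalues_nonneg i, hρ.1.eigenvalues_le_one hρ1 i⟩
  have hweights : ∑ i, hρ.1.spectralWeight P i = 1 := by
    rw [hρ.1.sum_spectralWeight, hPtr, RCLike.one_re]
  have := hf.le_map_sum (fun i _ ↦ hρ.1.spectralWeight_nonneg hP i) hweights heig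
  rw [← RCLike.re_to_complex, ← RCLike.re_to_complex, hρ.1.re_trace_cfc_mul, hρ.1.re_trace_mul]
  simpa only [smul_eq_mul] using this
end
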